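/- Let H(z;q) = Σ_{n=0}^∞ (-1;q)_n q^{n(n+1)/2}/((zq;q)_n (z^{-1}q;q)_n) and g₂(z;q) = Σ_{n=0}^∞ (-q;q)_n q^{n(n+1)/2}/((z;q)_{n+1}(z^{-1}q;q)_{n+1}). Then (1+z) H(z;q) = (1-z) + 2z(1-z) g₂(z;q), for |q|<1 and z with all denominators nonzero. -/

import Mathlib

open scoped BigOperators

/-- Finite q-Pochhammer symbol `(x;q)_n = ∏_{k=0}^{n-1} (1 - x qᵏ)`. -/
noncomputable def poch (x q : ℂ) (n : ℕ) : ℂ := ∏ k ∈ Finset.range n, (1 - x * q ^ k)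

/-- Infinite q-Pochhammer symbol `(x;q)_∞ = ∏_{k≥0} (1 - x qᵏ)`. -/
noncomputable def pochInf (x q : ℂ) : ℂ := ∏' k : ℕ, (1 - x * q ^ k)

/-!
With `Tₙ = 2z (-q;q)ₙ q^(n(n+1)/2) / ((zq;q)ₙ (z⁻¹q;q)ₙ)`, the `(n+1)`-st term of `(1+z)H` equals
`2z(1-z)` times the `n`-th term of `g₂` plus `Tₙ₊₁ - Tₙ`, an identity of rational functions.
The Pochhammer symbols converge to nonzero infinite products and `q^(n(n+1)/2)` decays
geometrically, so `H` and `∑ Tₙ` converge, and summing the identity telescopes to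
`(1+z)(H - 1) = 2z(1-z)g₂ - T₀ = 2z(1-z)g₂ - 2z`.
-/

open Filter Topology Asymptotics

section Pochhammer

variable (x q : ℂ)

lemma poch_zero : poch x q 0 = 1 := Finset.prod_range_zero _

lemma poch_succ (n : ℕ) : poch x q (n + 1) = poch x q n * (1 - x * q ^ n) :=
  Finset.prod_range_succ _ n

lemma poch_succ' (n : ℕ) : poch x q (n + 1) = (1 - x) * poch (x * q) q n := by
  simp only [poch, Finset.prod_range_succ', pow_succ, pow_zero, mul_one, mul_assoc, mul_comm]

variable {x q}

lemma summable_norm_mul_pow (hq : ‖q‖ < 1) : Summable fun k : ℕ => ‖x * q ^ k‖ := by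
  simpa only [norm_mul, norm_pow] using
    (summable_geometric_of_lt_one (norm_nonneg q) hq).mul_left ‖x‖

lemma hasProd_pochInf (hq : ‖q‖ < 1) : HasProd (fun k : ℕ => 1 - x * q ^ k) (pochInf x q) := by
  have := multipliable_one_add_of_summable (f := fun k : ℕ => -(x * q ^ k))
    (by simpa only [norm_neg] using summable_norm_mul_pow hq)
  simp only [← sub_eq_add_neg] at this
  exact this.hasProd

lemma tendsto_poch (hq : ‖q‖ < 1) : Tendsto (poch x q) atTop (𝓝 (pochInf x q)) :=
  (hasProd_pochInf hq).tendsto_prod_nat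

lemma pochInf_ne_zero (hq : ‖q‖ < 1) (hx : ∀ k : ℕ, x * q ^ k ≠ 1) : pochInf x q ≠ 0 := by
  have := tprod_one_add_ne_zero_of_summable (f := fun k : ℕ => -(x * q ^ k))
    (fun k => by simpa only [← sub_eq_add_neg] using sub_ne_zero.2 (hx k).symm)
    (by simpa only [norm_neg] using summable_norm_mul_pow hq)
  simpa only [pochInf, ← sub_eq_add_neg] using this

end Pochhammer

lemma triangle_succ (n : ℕ) : (n + 1) * (n + 1 + 1) / 2 = n * (n + 1) / 2 + (n + 1) := by
  rw [show (n + 1) * (n + 1 + 1) = n * (n + 1) + 2 * (n + 1) by ring,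
    Nat.add_mul_div_left _ _ two_pos]

lemma self_le_triangle (n : ℕ) : n ≤ n * (n + 1) / 2 := by
  rw [Nat.le_div_iff_mul_le two_pos]
  cases n with
  | zero => rfl
  | succ m => exact Nat.mul_le_mul_left _ (by omega)

lemma summable_mul_pow_triangle {𝕜 : Type*} [NormedField 𝕜] [CompleteSpace 𝕜] {q c : 𝕜}
    {u : ℕ → 𝕜} (hq : ‖q‖ < 1) (hu : Tendsto u atTop (𝓝 c)) : Summable fun n => u n * q ^ (n * (n + 1) / 2) := by
  refine summable_of_isBigO_nat (summable_geometric_of_lt_one (norm_nonneg q) hq) ?_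
  have hpow : (fun n : ℕ => q ^ (n * (n + 1) / 2)) =O[atTop] fun n => ‖q‖ ^ n :=
    isBigO_of_le _ fun n => by
      rw [norm_pow, Real.norm_of_nonneg (by positivity)]
      exact pow_le_pow_of_le_one (norm_nonneg q) hq.le (self_le_triangle n)
  simpa only [one_mul] using (hu.isBigO_one ℝ).mul hpow

lemma summable_poch_mul_pow_triangle_div {a b c q : ℂ} (hq : ‖q‖ < 1)
    (hb : ∀ k : ℕ, b * q ^ k ≠ 1) (hc : ∀ k : ℕ, c * q ^ k ≠ 1) :
    Summable fun n => poch a q n * q ^ (n * (n + 1) / 2) / (poch b q n * poch c q n) := by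
  have hlim := (tendsto_poch hq (x := a)).div ((tendsto_poch hq).mul (tendsto_poch hq))
    (mul_ne_zero (pochInf_ne_zero hq hb) (pochInf_ne_zero hq hc))
  simpa only [mul_div_right_comm] using
    summable_mul_pow_triangle (u := fun n => poch a q n / (poch b q n * poch c q n)) hq hlim

lemma tsum_eq_of_telescoping {G : Type*} [AddCommGroup G] [TopologicalSpace G]
    [IsTopologicalAddGroup G] [T2Space G] {A B T : ℕ → G} (hA : Summable A) (hT : Summable T)
    (h : ∀ n, A (n + 1) = B n + (T (n + 1) - T n)) :
    ∑' n, A n = A 0 + ∑' n, B n - T 0 := by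
  have hA' := (hasSum_nat_add_iff' 1).2 hA.hasSum
  have hT' := ((hasSum_nat_add_iff' 1).2 hT.hasSum).sub hT.hasSum
  have hB : HasSum B (∑' n, A n - A 0 - (∑' n, T n - T 0 - ∑' n, T n)) := by
    simpa only [h, Finset.sum_range_one, add_sub_cancel_right] using hA'.sub hT'
  rw [hB.tsum_eq]
  abel

lemma mul_mul_pow_ne_one {x q : ℂ} (hx : ∀ k : ℕ, 1 ≤ k → x * q ^ k ≠ 1) (k : ℕ) :
    x * q * q ^ k ≠ 1 := by
  simpa only [mul_assoc, ← pow_succ'] using hx (k + 1) k.succ_pos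

lemma telescoping_step {q z : ℂ} (hz : z ≠ 0) (hzq : ∀ k : ℕ, z * q ^ k ≠ 1)
    (hzq' : ∀ k : ℕ, z⁻¹ * q * q ^ k ≠ 1) (n : ℕ) :
    (1 + z) * (poch (-1) q (n + 1) * q ^ ((n + 1) * (n + 1 + 1) / 2) /
        (poch (z * q) q (n + 1) * poch (z⁻¹ * q) q (n + 1))) =
      2 * z * (1 - z) * (poch (-q) q n * q ^ (n * (n + 1) / 2) /
          (poch z q (n + 1) * poch (z⁻¹ * q) q (n + 1))) +
        (2 * z * (poch (-q) q (n + 1) * q ^ ((n + 1) * (n + 1 + 1) / 2) /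
            (poch (z * q) q (n + 1) * poch (z⁻¹ * q) q (n + 1))) -
          2 * z * (poch (-q) q n * q ^ (n * (n + 1) / 2) /
            (poch (z * q) q n * poch (z⁻¹ * q) q n))) := by
  have hzq₁ := mul_mul_pow_ne_one fun k _ => hzq k
  have h1 : 1 - z ≠ 0 := sub_ne_zero.2 (by simpa using (hzq 0).symm)
  have hα : 1 - z * q * q ^ n ≠ 0 := sub_ne_zero.2 (hzq₁ n).symm
  have hβ : z - q * q ^ n ≠ 0 := fun h => hzq' n <| by
    rw [mul_assoc, inv_mul_eq_one₀ hz, sub_eq_zero.1 h]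
  rw [poch_succ' (-1), neg_one_mul, poch_succ' z, poch_succ (z * q), poch_succ (z⁻¹ * q),
    poch_succ (-q), triangle_succ, pow_add]
  field_simp
  ring

/-- McIntosh's relation between the overpartition rank function `H(z;q)` and
the universal mock theta function `g₂(z;q)`: `(1+z)H(z;q) = (1-z) + 2z(1-z)g₂(z;q)`. -/
theorem overpartition_rank_g2_relation (q z : ℂ) (hq : ‖q‖ < 1) (hz : z ≠ 0)
    (hzq : ∀ k : ℕ, z * q ^ k ≠ 1) (hzq' : ∀ k : ℕ, 1 ≤ k → z⁻¹ * q ^ k ≠ 1) :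
    (1 + z) * ∑' n : ℕ, poch (-1) q n * q ^ (n * (n + 1) / 2) /
        (poch (z * q) q n * poch (z⁻¹ * q) q n) =
      (1 - z) + 2 * z * (1 - z) *
        ∑' n : ℕ, poch (-q) q n * q ^ (n * (n + 1) / 2) /
          (poch z q (n + 1) * poch (z⁻¹ * q) q (n + 1)) := by
  have hzq₁ := mul_mul_pow_ne_one fun k _ => hzq k
  have hzq₂ := mul_mul_pow_ne_one hzq'
  have h := tsum_eq_of_telescoping
    ((summable_poch_mul_pow_triangle_div (a := -1) hq hzq₁ hzq₂).mul_left (1 + z))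
    ((summable_poch_mul_pow_triangle_div (a := -q) hq hzq₁ hzq₂).mul_left (2 * z))
    (telescoping_step hz hzq hzq₂)
  simp only [tsum_mul_left, poch_zero, zero_mul, Nat.zero_div, pow_zero, mul_one, div_one] at h
  linear_combination h
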